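/- Let q(z) = q₀z² + 2q₁z + q₂ be a real quadratic. For a real polynomial P of degree at most 4, set E(P)(z) = q(z)²P'''(z) − 3q(z)q'(z)P''(z) + 3(q'(z)² + q(z)q''(z))P'(z) − 6q'(z)q''(z)P(z). Then: (a) E(P) is a polynomial of degree at most 2; (b) writing E(P)(z) = e₀z² + 2e₁z + e₂, one has ⟨E(P), q⟩ = 2e₁q₁ − e₀q₂ − e₂q₀ = 0; and (c) if q is nonzero, then for every real quadratic w with ⟨w,q⟩ = 0 there exists a real polynomial P of degree at most 4 with E(P) = w. -/

import Mathlib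

/-- The expression `E(P)(z) = q(z)²P'''(z) − 3q(z)q'(z)P''(z) + 3(q'(z)² + q(z)q''(z))P'(z)
− 6q'(z)q''(z)P(z)` for the quartic `P(z) = c₀z⁴ + c₁z³ + c₂z² + c₃z + c₄` and the
quadratic `q(z) = q₀z² + 2q₁z + q₂`. -/
noncomputable def EQuartic (q0 q1 q2 c0 c1 c2 c3 c4 z : ℝ) : ℝ :=
  (q0 * z ^ 2 + 2 * q1 * z + q2) ^ 2 * (24 * c0 * z + 6 * c1)
    - 3 * (q0 * z ^ 2 + 2 * q1 * z + q2) * (2 * q0 * z + 2 * q1) *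
        (12 * c0 * z ^ 2 + 6 * c1 * z + 2 * c2)
    + 3 * ((2 * q0 * z + 2 * q1) ^ 2 + (q0 * z ^ 2 + 2 * q1 * z + q2) * (2 * q0)) *
        (4 * c0 * z ^ 3 + 3 * c1 * z ^ 2 + 2 * c2 * z + c3)
    - 6 * (2 * q0 * z + 2 * q1) * (2 * q0) *
        (c0 * z ^ 4 + c1 * z ^ 3 + c2 * z ^ 2 + c3 * z + c4)

/-!
Expanding, the `z⁴` and `z³` terms of `E(P)` cancel, leaving a quadratic whose coefficients
`e₀, e₁, e₂` are explicit linear forms in the coefficients `c₀, …, c₄` of `P`, and these satisfy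
`⟨e, q⟩ = 0` identically. For surjectivity onto the plane `q^⊥` it then suffices to use two of
the `cᵢ`: the equations for two of the `wᵢ` are triangular in them, and the third equation
follows from `⟨w, q⟩ = 0`. Which pair works depends on which of `q₀`, `q₂`, `q₁` is nonzero;
when `q₀ = q₂ = 0`, both `e₁` and (by orthogonality) `w₁` vanish.
-/

namespace EQuartic

section

variable (q0 q1 q2 c0 c1 c2 c3 c4 : ℝ)

def coeff0 : ℝ :=
  24 * q1 * q2 * c0 - (12 * q1 ^ 2 + 6 * q0 * q2) * c1 + 12 * q0 * q1 * c2 - 6 * q0 ^ 2 * c3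

def coeff1 : ℝ :=
  12 * q2 ^ 2 * c0 - 6 * q1 * q2 * c1 + 6 * q0 * q1 * c3 - 12 * q0 ^ 2 * c4

def coeff2 : ℝ :=
  6 * q2 ^ 2 * c1 - 12 * q1 * q2 * c2 + (12 * q1 ^ 2 + 6 * q0 * q2) * c3 - 24 * q0 * q1 * c4

theorem eq_quadratic (z : ℝ) :
    EQuartic q0 q1 q2 c0 c1 c2 c3 c4 z =
      coeff0 q0 q1 q2 c0 c1 c2 c3 * z ^ 2 + 2 * coeff1 q0 q1 q2 c0 c1 c3 c4 * z
        + coeff2 q0 q1 q2 c1 c2 c3 c4 := by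
  unfold EQuartic coeff0 coeff1 coeff2
  ring

theorem coeffs_orthogonal :
    2 * coeff1 q0 q1 q2 c0 c1 c3 c4 * q1 - coeff0 q0 q1 q2 c0 c1 c2 c3 * q2
      - coeff2 q0 q1 q2 c1 c2 c3 c4 * q0 = 0 := by
  unfold coeff0 coeff1 coeff2
  ring

end

section

variable {q0 q1 q2 w0 w1 w2 : ℝ}

theorem exists_coeffs_eq_of_ne_zero_left (h0 : q0 ≠ 0)
    (hw : 2 * w1 * q1 - (w2 * q0 + w0 * q2) = 0) :
    ∃ c0 c1 c2 c3 c4 : ℝ, coeff0 q0 q1 q2 c0 c1 c2 c3 = w0 ∧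
      coeff1 q0 q1 q2 c0 c1 c3 c4 = w1 ∧ coeff2 q0 q1 q2 c1 c2 c3 c4 = w2 := by
  refine ⟨0, 0, 0, -w0 / (6 * q0 ^ 2), -(q1 * w0 + q0 * w1) / (12 * q0 ^ 3), ?_, ?_, ?_⟩ <;>
    simp only [coeff0, coeff1, coeff2] <;> field_simp
  · ring
  · ring
  · linear_combination 72 * q0 * hw

theorem exists_coeffs_eq_of_ne_zero_right (h2 : q2 ≠ 0)
    (hw : 2 * w1 * q1 - (w2 * q0 + w0 * q2) = 0) :
    ∃ c0 c1 c2 c3 c4 : ℝ, coeff0 q0 q1 q2 c0 c1 c2 c3 = w0 ∧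
      coeff1 q0 q1 q2 c0 c1 c3 c4 = w1 ∧ coeff2 q0 q1 q2 c1 c2 c3 c4 = w2 := by
  refine ⟨(q2 * w1 + q1 * w2) / (12 * q2 ^ 3), w2 / (6 * q2 ^ 2), 0, 0, 0, ?_, ?_, ?_⟩ <;>
    simp only [coeff0, coeff1, coeff2] <;> field_simp
  · linear_combination 72 * q2 * hw
  · ring
  · ring

theorem exists_coeffs_eq_of_ne_zero_middle (h1 : q1 ≠ 0) (hw : 2 * w1 * q1 = 0) :
    ∃ c0 c1 c2 c3 c4 : ℝ, coeff0 0 q1 0 c0 c1 c2 c3 = w0 ∧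
      coeff1 0 q1 0 c0 c1 c3 c4 = w1 ∧ coeff2 0 q1 0 c1 c2 c3 c4 = w2 := by
  obtain rfl : w1 = 0 := by simpa [h1] using hw
  refine ⟨0, -w0 / (12 * q1 ^ 2), 0, w2 / (12 * q1 ^ 2), 0, ?_, ?_, ?_⟩ <;>
    simp only [coeff0, coeff1, coeff2] <;> field_simp <;> ring

theorem exists_coeffs_eq_of_orthogonal (hq : ¬(q0 = 0 ∧ q1 = 0 ∧ q2 = 0))
    (hw : 2 * w1 * q1 - (w2 * q0 + w0 * q2) = 0) :
    ∃ c0 c1 c2 c3 c4 : ℝ, coeff0 q0 q1 q2 c0 c1 c2 c3 = w0 ∧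
      coeff1 q0 q1 q2 c0 c1 c3 c4 = w1 ∧ coeff2 q0 q1 q2 c1 c2 c3 c4 = w2 := by
  by_cases h0 : q0 = 0
  · by_cases h2 : q2 = 0
    · subst h0 h2
      exact exists_coeffs_eq_of_ne_zero_middle (by tauto) (by simpa using hw)
    · exact exists_coeffs_eq_of_ne_zero_right h2 hw
  · exact exists_coeffs_eq_of_ne_zero_left h0 hw

end

end EQuartic

/-- (a) `E(P)` is a quadratic `e₀z² + 2e₁z + e₂`; (b) it is orthogonal to `q`,
i.e. `2e₁q₁ − e₀q₂ − e₂q₀ = 0`; (c) if `q ≠ 0`, every real quadratic `w` orthogonal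
to `q` arises as `E(P)` for some quartic `P`. -/
theorem EQuartic_quadratic_orthogonal_surjective (q0 q1 q2 : ℝ) :
    (∀ c0 c1 c2 c3 c4 : ℝ, ∃ e0 e1 e2 : ℝ,
      (∀ z : ℝ, EQuartic q0 q1 q2 c0 c1 c2 c3 c4 z = e0 * z ^ 2 + 2 * e1 * z + e2) ∧
      2 * e1 * q1 - e0 * q2 - e2 * q0 = 0)
    ∧ (¬(q0 = 0 ∧ q1 = 0 ∧ q2 = 0) →
      ∀ w0 w1 w2 : ℝ, 2 * w1 * q1 - (w2 * q0 + w0 * q2) = 0 →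
        ∃ c0 c1 c2 c3 c4 : ℝ, ∀ z : ℝ,
          EQuartic q0 q1 q2 c0 c1 c2 c3 c4 z = w0 * z ^ 2 + 2 * w1 * z + w2) := by
  refine ⟨fun c0 c1 c2 c3 c4 => ⟨_, _, _, EQuartic.eq_quadratic q0 q1 q2 c0 c1 c2 c3 c4,
    EQuartic.coeffs_orthogonal q0 q1 q2 c0 c1 c2 c3 c4⟩, fun hq w0 w1 w2 hw => ?_⟩
  obtain ⟨c0, c1, c2, c3, c4, h0, h1, h2⟩ := EQuartic.exists_coeffs_eq_of_orthogonal hq hw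
  exact ⟨c0, c1, c2, c3, c4, fun z => by rw [EQuartic.eq_quadratic, h0, h1, h2]⟩
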